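/- arXiv:2601.01057 — 3 statements merged into one kernel-verified Lean document; each statement's English description precedes it below -/
import Mathlib

section
/- Let X̃ be a CAT(0) cube complex (viewed as a median graph on its vertex set with the combinatorial metric), and let Ã, B̃ be convex subcomplexes with nearest-point projections Π_Ã, Π_B̃. Then for every vertex x, the projection of x to the gate Π_Ã(B̃) equals Π_Ã(Π_B̃(x)); consequently the gate operation ⫛ defined by Ã ⫛ B̃ = Π_Ã(B̃) is associative: (Ã ⫛ B̃) ⫛ C̃ = Ã ⫛ (B̃ ⫛ C̃) for convex subcomplexes Ã, B̃, C̃. -/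
/-- `p` is a gate (nearest-point projection) map onto the subset `A`:
every point `x` has `p x ∈ A`, and `p x` lies "between" `x` and every point of `A`. -/
def IsGate {X : Type*} [MetricSpace X] (A : Set X) (p : X → X) : Prop :=
  ∀ x : X, p x ∈ A ∧ ∀ b ∈ A, dist x b = dist x (p x) + dist (p x) b

/-- Metric convexity: any point on a geodesic between two points of `A` lies in `A`. -/
def MConvex {X : Type*} [MetricSpace X] (A : Set X) : Prop :=
  ∀ x ∈ A, ∀ y ∈ A, ∀ z : X, dist x z + dist z y = dist x y → z ∈ A

/-- The vertex set of a `CAT(0)` cube complex with the combinatorial metric is a median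
(metric) space: every triple of points has a unique median. -/
def IsMedianMetric (X : Type*) [MetricSpace X] : Prop :=
  ∀ x y z : X, ∃! w : X,
    dist x w + dist w y = dist x y ∧
    dist x w + dist w z = dist x z ∧
    dist y w + dist w z = dist y z

/-- Key betweenness lemma in a median metric space: the relation
"`n` lies between `·` and `c`" has convex fibers: if `z` is between `x` and `y`,
and `n` is between `x` and `c` as well as between `y` and `c`, then `n` is
between `z` and `c`. -/
lemma medN {X : Type*} [MetricSpace X] (hmed : IsMedianMetric X)
    (x y z n c : X)
    (hz : dist x z + dist z y = dist x y)
    (hnx : dist x n + dist n c = dist x c)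
    (hny : dist y n + dist n c = dist y c) :
    dist z n + dist n c = dist z c := by
  obtain ⟨k, ⟨hk1, hk2, hk3⟩, -⟩ := hmed x y n
  obtain ⟨w, ⟨hw1, hw2, hw3⟩, -⟩ := hmed x z c
  obtain ⟨j, ⟨hj1, hj2, hj3⟩, -⟩ := hmed y c w
  obtain ⟨mm, -, hmu⟩ := hmed x y c
  -- k ∈ I(x,c) and n ∈ I(k,c)
  have T1 : dist k c ≤ dist k n + dist n c := dist_triangle k n c
  have T2 : dist x c ≤ dist x k + dist k c := dist_triangle x k c
  have hkxc : dist x k + dist k c = dist x c := by linarith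
  have hstar : dist k n + dist n c = dist k c := by linarith
  -- k ∈ I(y,c)
  have T3 : dist y c ≤ dist y k + dist k c := dist_triangle y k c
  have hkyc : dist y k + dist k c = dist y c := by linarith
  -- k is the median of (x,y,c)
  have hkm : k = mm := hmu k ⟨hk1, hkxc, hkyc⟩
  -- w ∈ I(x,y)
  have T4 : dist w y ≤ dist w z + dist z y := dist_triangle w z y
  have T5 : dist x y ≤ dist x w + dist w y := dist_triangle x w y
  have hwxy : dist x w + dist w y = dist x y := by linarith
  -- j ∈ I(x,y): chain j ∈ I(y,w), w ∈ I(y,x)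
  have c1 : dist w y = dist y w := dist_comm w y
  have T6 : dist y x ≤ dist y j + dist j x := dist_triangle y j x
  have T7 : dist j x ≤ dist j w + dist w x := dist_triangle j w x
  have c2 : dist w x = dist x w := dist_comm w x
  have c3 : dist y x = dist x y := dist_comm y x
  have hjxy' : dist y j + dist j x = dist y x := by linarith
  -- j ∈ I(x,c): chain j ∈ I(c,w), w ∈ I(c,x)
  have c4 : dist w c = dist c w := dist_comm w c
  have T8 : dist c x ≤ dist c j + dist j x := dist_triangle c j x
  have T9 : dist j x ≤ dist j w + dist w x := dist_triangle j w x
  have c5 : dist c x = dist x c := dist_comm c x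
  have hjxc' : dist c j + dist j x = dist c x := by linarith
  -- j is the median of (x,y,c)
  have c6 : dist j x = dist x j := dist_comm j x
  have c7 : dist j y = dist y j := dist_comm j y
  have c8 : dist c j = dist j c := dist_comm c j
  have hjm : j = mm := by
    refine hmu j ⟨?_, ?_, ?_⟩
    · linarith
    · linarith
    · linarith
  have hjk : j = k := by rw [hjm, hkm]
  -- n ∈ I(c,w): chain n ∈ I(c,j), j ∈ I(c,w)
  have c9 : dist k n = dist j n := by rw [hjk]
  have c10 : dist k c = dist j c := by rw [hjk]
  have T10 : dist c w ≤ dist c n + dist n w := dist_triangle c n w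
  have T11 : dist n w ≤ dist n j + dist j w := dist_triangle n j w
  have c11 : dist c n = dist n c := dist_comm c n
  have c12 : dist n j = dist j n := dist_comm n j
  have c13 : dist c j = dist j c := dist_comm c j
  have hncw : dist c n + dist n w = dist c w := by linarith
  -- Goal: chain n ∈ I(c,w), w ∈ I(c,z)
  have T12 : dist c z ≤ dist c n + dist n z := dist_triangle c n z
  have T13 : dist n z ≤ dist n w + dist w z := dist_triangle n w z
  have c14 : dist c z = dist z c := dist_comm c z
  have c15 : dist n z = dist z n := dist_comm n z
  have c16 : dist w z = dist z w := dist_comm w z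
  linarith

/-- In (the vertex set of) a `CAT(0)` cube complex, for convex (gated)
subcomplexes `A, B` the projection of any point `x` to the gate `A ⫛ B = pA '' B` equals
`pA (pB x)`; consequently the gate operation is associative:
`(A ⫛ B) ⫛ C = A ⫛ (B ⫛ C)`. -/
theorem stmt6 {X : Type*} [MetricSpace X] (hmed : IsMedianMetric X)
    (A B C : Set X) (hA : MConvex A) (hB : MConvex B) (hC : MConvex C)
    (hAne : A.Nonempty) (hBne : B.Nonempty) (hCne : C.Nonempty)
    (pA pB pAB : X → X)
    (hpA : IsGate A pA) (hpB : IsGate B pB) (hpAB : IsGate (pA '' B) pAB) :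
    (∀ x : X, pAB x = pA (pB x)) ∧ pAB '' C = pA '' (pB '' C) := by
  -- Key claim: for every x and b ∈ B, the point a := pA (pB x) lies between x and pA b.
  have key : ∀ x : X, ∀ b ∈ B,
      dist x (pA b) = dist x (pA (pB x)) + dist (pA (pB x)) (pA b) := by
    intro x b hb
    obtain ⟨hzB, hgB⟩ := hpB x
    obtain ⟨huA, hgx⟩ := hpA x
    obtain ⟨haA, hgz⟩ := hpA (pB x)
    obtain ⟨hgA, hgb⟩ := hpA b
    -- the median n of (pB x, pA x, pA b)
    obtain ⟨n, ⟨hn1, hn2, hn3⟩, -⟩ := hmed (pB x) (pA x) (pA b)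
    -- n lies between two points of A, hence n ∈ A
    have hnA : n ∈ A := hA (pA x) huA (pA b) hgA n hn3
    -- gate equalities from pB x
    have e1 : dist (pB x) n = dist (pB x) (pA (pB x)) + dist (pA (pB x)) n := hgz n hnA
    have e2 : dist (pB x) (pA x) = dist (pB x) (pA (pB x)) + dist (pA (pB x)) (pA x) :=
      hgz (pA x) huA
    have e3 : dist (pB x) (pA b) = dist (pB x) (pA (pB x)) + dist (pA (pB x)) (pA b) :=
      hgz (pA b) hgA
    -- n ∈ I(a,u) and n ∈ I(a,g)
    have hnau : dist (pA (pB x)) n + dist n (pA x) = dist (pA (pB x)) (pA x) := by linarith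
    have hnag : dist (pA (pB x)) n + dist n (pA b) = dist (pA (pB x)) (pA b) := by linarith
    -- x-side gate equalities
    have ex1 : dist x n = dist x (pA x) + dist (pA x) n := hgx n hnA
    have ex2 : dist x (pA (pB x)) = dist x (pA x) + dist (pA x) (pA (pB x)) := hgx _ haA
    have cx1 : dist (pA x) n = dist n (pA x) := dist_comm _ _
    have cx2 : dist (pA x) (pA (pB x)) = dist (pA (pB x)) (pA x) := dist_comm _ _
    have cx3 : dist n (pA (pB x)) = dist (pA (pB x)) n := dist_comm _ _
    -- n ∈ I(x, a)
    have hnxa : dist x n + dist n (pA (pB x)) = dist x (pA (pB x)) := by linarith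
    -- b-side gate equalities
    have eb1 : dist b n = dist b (pA b) + dist (pA b) n := hgb n hnA
    have eb2 : dist b (pA (pB x)) = dist b (pA b) + dist (pA b) (pA (pB x)) := hgb _ haA
    have cb1 : dist (pA b) n = dist n (pA b) := dist_comm _ _
    have cb2 : dist (pA b) (pA (pB x)) = dist (pA (pB x)) (pA b) := dist_comm _ _
    -- n ∈ I(b, a)
    have hnba : dist b n + dist n (pA (pB x)) = dist b (pA (pB x)) := by linarith
    -- pB x ∈ I(x, b)
    have hzb : dist x (pB x) + dist (pB x) b = dist x b := (hgB b hb).symm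
    -- apply the median lemma: n ∈ I(pB x, a)
    have hN := medN hmed x b (pB x) n (pA (pB x)) hzb hnxa hnba
    -- combine with gate equality e1 with s := a, i.e. a ∈ I(pB x, n): forces n = a
    have ea : dist (pB x) (pA (pB x)) =
        dist (pB x) (pA (pB x)) + dist (pA (pB x)) (pA (pB x)) := hgz _ haA
    have ca : dist (pA (pB x)) (pA (pB x)) = 0 := dist_self _
    have hna0 : dist n (pA (pB x)) = 0 := by linarith
    have hna : n = pA (pB x) := by rwa [dist_eq_zero] at hna0
    -- a ∈ I(u, g), then conclude via the gate at x
    have hag : dist (pA x) (pA (pB x)) + dist (pA (pB x)) (pA b) = dist (pA x) (pA b) := by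
      rw [← hna]; exact hn3
    have exg : dist x (pA b) = dist x (pA x) + dist (pA x) (pA b) := hgx (pA b) hgA
    linarith
  have main : ∀ x : X, pAB x = pA (pB x) := by
    intro x
    obtain ⟨hmem, hgate⟩ := hpAB x
    obtain ⟨b₀, hb₀, hq⟩ := hmem
    have ha_mem : pA (pB x) ∈ pA '' B := ⟨pB x, (hpB x).1, rfl⟩
    have h1 := hgate _ ha_mem
    have h2 := key x b₀ hb₀
    rw [hq] at h2
    have c1 : dist (pA (pB x)) (pAB x) = dist (pAB x) (pA (pB x)) := dist_comm _ _
    have h0 : dist (pAB x) (pA (pB x)) = 0 := by linarith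
    exact dist_eq_zero.mp h0
  refine ⟨main, ?_⟩
  have : pAB '' C = (pA ∘ pB) '' C := Set.image_congr' (fun t => main t)
  rw [this, Set.image_comp]
end

section
/- Let Ã, B̃, C̃ be convex (gated) subcomplexes of a CAT(0) cube complex. Then (Ã ⫛ B̃) ∩ (Ã ⫛ C̃) ⊆ Ã ⫛ (B̃ ⫛ C̃), where ⫛ denotes the gate/projection operation Ã ⫛ B̃ = Π_Ã(B̃). -/
/-- For convex (gated) subcomplexes `Ã, B̃, C̃` of a `CAT(0)` cube
complex, `(Ã ⫛ B̃) ∩ (Ã ⫛ C̃) ⊆ Ã ⫛ (B̃ ⫛ C̃)`, where `Ã ⫛ B̃ := Π_Ã(B̃)`. -/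
theorem stmt7 {X : Type*} [MetricSpace X] (hmed : IsMedianMetric X)
    (A B C : Set X) (hA : MConvex A) (hB : MConvex B) (hC : MConvex C)
    (hAne : A.Nonempty) (hBne : B.Nonempty) (hCne : C.Nonempty)
    (pA pB : X → X) (hpA : IsGate A pA) (hpB : IsGate B pB) :
    (pA '' B) ∩ (pA '' C) ⊆ pA '' (pB '' C) := by
  rintro x ⟨⟨b, hbB, hxb⟩, ⟨c, hcC, hxc⟩⟩
  have hxA : x ∈ A := hxb ▸ (hpA b).1
  set b' := pB c with hb'def
  have hb'B : b' ∈ B := (hpB c).1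
  -- gate facts for A at b and c, both with gate x
  have gb : ∀ y ∈ A, dist b y = dist b x + dist x y := by
    intro y hy
    have h := (hpA b).2 y hy
    rwa [hxb] at h
  have gc : ∀ y ∈ A, dist c y = dist c x + dist x y := by
    intro y hy
    have h := (hpA c).2 y hy
    rwa [hxc] at h
  -- gate fact for B at c, applied to b
  have gBb : dist c b = dist c b' + dist b' b := (hpB c).2 b hbB
  -- the key fact: x is a gate for b' in A
  have key : ∀ y ∈ A, dist b' y = dist b' x + dist x y := by
    intro y hy
    obtain ⟨n, ⟨hn1, hn2, hn3⟩, -⟩ := hmed b' x y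
    -- hn1 : dist b' n + dist n x = dist b' x
    -- hn2 : dist b' n + dist n y = dist b' y
    -- hn3 : dist x n + dist n y = dist x y
    have hnA : n ∈ A := hA x hxA y hy n hn3
    have F1 : dist b n = dist b x + dist x n := gb n hnA
    have F2 : dist c n = dist c x + dist x n := gc n hnA
    -- v := median (x, b, c)
    obtain ⟨v, ⟨hv1, hv2, hv3⟩, -⟩ := hmed x b c
    -- hv1 : dist x v + dist v b = dist x b
    -- hv2 : dist x v + dist v c = dist x c
    -- hv3 : dist b v + dist v c = dist b c
    -- B(n, x, v)
    have hnxv : dist n x + dist x v = dist n v := by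
      have t1 := dist_triangle n x v
      have t2 := dist_triangle n v b
      have c1 : dist n b = dist b n := dist_comm n b
      have c2 : dist n x = dist x n := dist_comm n x
      have c3 : dist v b = dist b v := dist_comm v b
      have c4 : dist x b = dist b x := dist_comm x b
      linarith
    -- v is also the median of (n, b, c)
    have hnvb : dist n v + dist v b = dist n b := by
      have c1 : dist n b = dist b n := dist_comm n b
      have c2 : dist n x = dist x n := dist_comm n x
      have c4 : dist x b = dist b x := dist_comm x b
      linarith
    have hnvc : dist n v + dist v c = dist n c := by
      have c1 : dist n c = dist c n := dist_comm n c
      have c2 : dist n x = dist x n := dist_comm n x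
      have c4 : dist x c = dist c x := dist_comm x c
      linarith
    obtain ⟨u, -, huniq⟩ := hmed n b c
    have hvu : v = u := huniq v ⟨hnvb, hnvc, hv3⟩
    -- B(b, b', c) from the gate of B at c
    have hbb'c : dist b b' + dist b' c = dist b c := by
      have c1 : dist c b = dist b c := dist_comm c b
      have c2 : dist c b' = dist b' c := dist_comm c b'
      have c3 : dist b' b = dist b b' := dist_comm b' b
      linarith
    -- p := median (n, b, b')
    obtain ⟨p, ⟨hp1, hp2, hp3⟩, -⟩ := hmed n b b'
    -- hp1 : dist n p + dist p b = dist n b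
    -- hp2 : dist n p + dist p b' = dist n b'
    -- hp3 : dist b p + dist p b' = dist b b'
    -- squeeze: B(p, b', c) and B(b, p, c)
    have hpb'c : dist p b' + dist b' c = dist p c := by
      have t1 := dist_triangle p b' c
      have t2 := dist_triangle b p c
      have c1 : dist b p = dist p b := dist_comm b p
      have c2 : dist p b' = dist b' p := dist_comm p b'
      linarith
    have hbpc : dist b p + dist p c = dist b c := by
      have c1 : dist b p = dist p b := dist_comm b p
      linarith
    -- q := median (p, n, c)
    obtain ⟨q, ⟨hq1, hq2, hq3⟩, -⟩ := hmed p n c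
    -- hq1 : dist p q + dist q n = dist p n
    -- hq2 : dist p q + dist q c = dist p c
    -- hq3 : dist n q + dist q c = dist n c
    -- squeeze: B(b, q, c) and B(b, p, q)
    have hbqc : dist b q + dist q c = dist b c := by
      have t1 := dist_triangle b q c
      have t2 := dist_triangle b p q
      linarith
    have hbpq : dist b p + dist p q = dist b q := by
      have t1 := dist_triangle b q c
      have t2 := dist_triangle b p q
      linarith
    -- B(n, q, b)
    have hnqb : dist n q + dist q b = dist n b := by
      have c1 : dist q b = dist b q := dist_comm q b
      have c2 : dist q n = dist n q := dist_comm q n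
      have c3 : dist p n = dist n p := dist_comm p n
      have c4 : dist b p = dist p b := dist_comm b p
      linarith
    have hqu : q = u := huniq q ⟨hnqb, hq3, hbqc⟩
    have hqv : q = v := hqu.trans hvu.symm
    -- B(n, v, b')
    have hnvb' : dist n v + dist v b' = dist n b' := by
      have hnqp : dist n q + dist q p = dist n p := by
        have c1 : dist q n = dist n q := dist_comm q n
        have c2 : dist p q = dist q p := dist_comm p q
        have c3 : dist p n = dist n p := dist_comm p n
        linarith
      rw [hqv] at hnqp
      have t1 := dist_triangle v p b'
      have t2 := dist_triangle n v b'
      have c4 : dist v p = dist q p := by rw [hqv]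
      have c5 : dist q p = dist p q := dist_comm q p
      have t3 : dist v b' ≤ dist v p + dist p b' := dist_triangle v p b'
      linarith
    -- chain: B(n, x, b')
    have hnxb' : dist n x + dist x b' = dist n b' := by
      have t1 := dist_triangle x v b'
      have t2 := dist_triangle n x b'
      linarith
    -- conclude n = x
    have hnx0 : dist n x = 0 := by
      have c1 : dist b' n = dist n b' := dist_comm b' n
      have c2 : dist x b' = dist b' x := dist_comm x b'
      linarith
    have hnx : n = x := dist_eq_zero.mp hnx0
    rw [hnx] at hn2
    linarith [hn2]
  -- conclude pA b' = x using uniqueness of the gate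
  refine ⟨b', ⟨c, hcC, rfl⟩, ?_⟩
  have h1 := (hpA b').2 x hxA
  have h2 := key (pA b') ((hpA b').1)
  have h0 : dist x (pA b') = 0 := by
    have c1 : dist (pA b') x = dist x (pA b') := dist_comm _ _
    linarith
  exact (dist_eq_zero.mp h0).symm
end

section
/- Let G be a group acting on a tree T, ṽ a vertex with Stab(ṽ) = G_v, and suppose that for every finite path ρ in T starting at ṽ there are, up to G_v-conjugacy, only finitely many infinite subgroups of the form Stab_pt(ρ). Assume further that any intersection of finitely many G_v-conjugates of these finitely many path-stabilizer representatives falls into finitely many G_v-conjugacy classes of infinite subgroups. Then there are only finitely many G_v-conjugacy classes of infinite subgroups of the form Stab_pt(T') where T' ranges over finite subtrees of T containing ṽ. -/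
/-- The conjugate subgroup `g H g⁻¹`. -/
def conjSub {G : Type*} [Group G] (g : G) (H : Subgroup G) : Subgroup G :=
  H.map (MulAut.conj g).toMonoidHom

/-- The pointwise stabilizer of a subset `S` for a group action. -/
def ptStab (G : Type*) [Group G] {V : Type*} [MulAction G V] (S : Set V) : Subgroup G where
  carrier := {g : G | ∀ x ∈ S, g • x = x}
  one_mem' := by intro x _; simp
  mul_mem' := by
    intro a b ha hb x hx
    rw [mul_smul, hb x hx, ha x hx]
  inv_mem' := by
    intro a ha x hx
    exact inv_smul_eq_iff.mpr (ha x hx).symm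

/-!
A finite connected `S ∋ v₀` is the union of the vertex sets of paths from `v₀` to its points, so
`Stab_pt(S)` is the finite intersection of their pointwise stabilizers. Each of these contains
`Stab_pt(S)`, hence is infinite when `Stab_pt(S)` is, and so is a `G_v`-conjugate of one of the
path representatives; the intersection hypothesis then applies to `Stab_pt(S)` itself.
-/

theorem ptStab_eq_fixingSubgroup {G V : Type*} [Group G] [MulAction G V] (S : Set V) :
    ptStab G S = fixingSubgroup G S :=
  Subgroup.ext fun _ => (mem_fixingSubgroup_iff G).symm

theorem ptStab_iUnion {G V : Type*} [Group G] [MulAction G V] {ι : Sort*} (S : ι → Set V) :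
    ptStab G (⋃ i, S i) = ⨅ i, ptStab G (S i) := by
  simp only [ptStab_eq_fixingSubgroup, fixingSubgroup_iUnion]

theorem Subgroup.infinite_of_le {G : Type*} [Group G] {H K : Subgroup G} (h : H ≤ K)
    [Infinite H] : Infinite K :=
  Infinite.of_injective _ (Subgroup.inclusion_injective h)

theorem SimpleGraph.Connected.exists_isPath_support_subset_of_induce {V : Type*}
    {T : SimpleGraph V} {S : Set V} (hS : (T.induce S).Connected) {u w : V}
    (hu : u ∈ S) (hw : w ∈ S) : ∃ p : T.Walk u w, p.IsPath ∧ ∀ x ∈ p.support, x ∈ S := by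
  classical
  obtain ⟨q⟩ := hS ⟨u, hu⟩ ⟨w, hw⟩
  let q' : T.Walk u w := q.map (SimpleGraph.Embedding.induce S).toHom
  refine ⟨q'.toPath, q'.toPath.2, fun x hx => ?_⟩
  have hx' : x ∈ (q.support.map _) :=
    q.support_map (SimpleGraph.Embedding.induce S).toHom ▸ q'.support_toPath_subset_support hx
  obtain ⟨y, -, rfl⟩ := List.mem_map.mp hx'
  exact y.2

theorem exists_conjSub_eq_iInf_of_finite {G : Type*} [Group G] {Gv : Subgroup G}
    {F F₂ : Finset (Subgroup G)}
    (hF₂ : ∀ (k : ℕ), 0 < k → ∀ (Ks : Fin k → Subgroup G) (gs : Fin k → G),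
      (∀ j, Ks j ∈ F) → (∀ j, gs j ∈ Gv) →
      Infinite ↥(⨅ j, conjSub (gs j) (Ks j)) →
      ∃ K₂ ∈ F₂, ∃ g ∈ Gv, conjSub g K₂ = ⨅ j, conjSub (gs j) (Ks j))
    {ι : Type*} [Finite ι] [Nonempty ι] (Ks : ι → Subgroup G) (gs : ι → G)
    (hKs : ∀ i, Ks i ∈ F) (hgs : ∀ i, gs i ∈ Gv) (hinf : Infinite ↥(⨅ i, conjSub (gs i) (Ks i))) :
    ∃ K₂ ∈ F₂, ∃ g ∈ Gv, conjSub g K₂ = ⨅ i, conjSub (gs i) (Ks i) := by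
  obtain ⟨k, ⟨e⟩⟩ := Finite.exists_equiv_fin ι
  have hk : 0 < k := Fin.pos_iff_nonempty.mpr (e.nonempty_congr.mp ‹_›)
  rw [← e.symm.iInf_comp] at hinf ⊢
  exact hF₂ k hk (Ks ∘ e.symm) (gs ∘ e.symm) (fun _ => hKs _) (fun _ => hgs _) hinf

theorem stmt17_general {G V : Type*} [Group G] [MulAction G V]
    (T : SimpleGraph V)
    (v₀ : V) (Gv : Subgroup G)
    (hpaths : ∃ F : Finset (Subgroup G),
      (∀ K ∈ F, ∃ (w : V) (p : T.Walk v₀ w), p.IsPath ∧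
          K = ptStab G {x : V | x ∈ p.support}) ∧
      (∀ (w : V) (p : T.Walk v₀ w), p.IsPath →
          Infinite ↥(ptStab G {x : V | x ∈ p.support}) →
          ∃ K ∈ F, ∃ g ∈ Gv, conjSub g K = ptStab G {x : V | x ∈ p.support}) ∧
      (∃ F₂ : Finset (Subgroup G),
        ∀ (k : ℕ), 0 < k → ∀ (Ks : Fin k → Subgroup G) (gs : Fin k → G),
          (∀ j, Ks j ∈ F) → (∀ j, gs j ∈ Gv) →
          Infinite ↥(⨅ j, conjSub (gs j) (Ks j)) →
          ∃ K₂ ∈ F₂, ∃ g ∈ Gv, conjSub g K₂ = ⨅ j, conjSub (gs j) (Ks j))) :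
    ∃ F₃ : Finset (Subgroup G), ∀ S : Set V,
      S.Finite → v₀ ∈ S → (T.induce S).Connected →
      Infinite ↥(ptStab G S) →
      ∃ K ∈ F₃, ∃ g ∈ Gv, conjSub g K = ptStab G S := by
  obtain ⟨F, -, hF, F₂, hF₂⟩ := hpaths
  refine ⟨F₂, fun S hSfin hv₀ hconn hinf => ?_⟩
  have : Finite S := hSfin
  have : Nonempty S := ⟨⟨v₀, hv₀⟩⟩
  choose p hp hpS using fun w : S => hconn.exists_isPath_support_subset_of_induce hv₀ w.2
  have hS : ptStab G S = ⨅ w : S, ptStab G {x | x ∈ (p w).support} := by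
    rw [← ptStab_iUnion]
    refine congrArg _ (Set.Subset.antisymm (fun x hx => ?_) (Set.iUnion_subset hpS))
    exact Set.mem_iUnion.mpr ⟨⟨x, hx⟩, (p ⟨x, hx⟩).end_mem_support⟩
  have hinf_path (w : S) : Infinite (ptStab G {x | x ∈ (p w).support}) :=
    Subgroup.infinite_of_le (hS ▸ iInf_le _ w)
  choose K hK g hg hKg using fun w : S => hF _ (p w) (hp w) (hinf_path w)
  simp only [hS, ← hKg] at hinf ⊢
  exact exists_conjSub_eq_iInf_of_finite hF₂ K g hK hg hinf

/-- Let `G` act on a tree `T`, `v₀` a vertex with stabilizer `G_v`.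
Suppose that up to `G_v`-conjugacy there are finitely many infinite pointwise stabilizers
of finite paths starting at `v₀` (with a finite set of path-stabilizer representatives),
and that finite intersections of `G_v`-conjugates of these representatives fall into
finitely many `G_v`-conjugacy classes of infinite subgroups.  Then there are only finitely
many `G_v`-conjugacy classes of infinite subgroups of the form `Stab_pt(T')` for finite
subtrees `T'` of `T` containing `v₀`. -/
theorem stmt17 {G V : Type*} [Group G] [MulAction G V]
    (T : SimpleGraph V) (htree : T.IsTree)
    (hact : ∀ (g : G) (x y : V), T.Adj x y → T.Adj (g • x) (g • y))
    (v₀ : V) (Gv : Subgroup G) (hGv : Gv = MulAction.stabilizer G v₀)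
    (hpaths : ∃ F : Finset (Subgroup G),
      (∀ K ∈ F, ∃ (w : V) (p : T.Walk v₀ w), p.IsPath ∧
          K = ptStab G {x : V | x ∈ p.support}) ∧
      (∀ (w : V) (p : T.Walk v₀ w), p.IsPath →
          Infinite ↥(ptStab G {x : V | x ∈ p.support}) →
          ∃ K ∈ F, ∃ g ∈ Gv, conjSub g K = ptStab G {x : V | x ∈ p.support}) ∧
      (∃ F₂ : Finset (Subgroup G),
        ∀ (k : ℕ), 0 < k → ∀ (Ks : Fin k → Subgroup G) (gs : Fin k → G),
          (∀ j, Ks j ∈ F) → (∀ j, gs j ∈ Gv) →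
          Infinite ↥(⨅ j, conjSub (gs j) (Ks j)) →
          ∃ K₂ ∈ F₂, ∃ g ∈ Gv, conjSub g K₂ = ⨅ j, conjSub (gs j) (Ks j))) :
    ∃ F₃ : Finset (Subgroup G), ∀ S : Set V,
      S.Finite → v₀ ∈ S → (T.induce S).Connected →
      Infinite ↥(ptStab G S) →
      ∃ K ∈ F₃, ∃ g ∈ Gv, conjSub g K = ptStab G S :=
  stmt17_general T v₀ Gv hpaths
end
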